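/- arXiv:2406.02628 — 2 statements merged into one kernel-verified Lean document; each statement's English description precedes it below -/
import Mathlib

section
/- Let 𝒜 and ℛ be finite sets, and let (X, A, R) be jointly distributed random variables on a discrete probability space such that X is uniformly distributed on {0,1}, A takes values in 𝒜, and R takes values in ℛ and is independent of the pair (X, A). If there exists a function f : 𝒜 × ℛ → {0,1} with Pr[f(A, R) = X] ≥ 0.51, then the mutual information satisfies I(X : A) ≥ 2·10⁻⁴. -/
/-!
Since `R` is independent of `(X, A)` and `X` is uniform, the predictor `f (A, R)` succeeds with
probability at most `1/2 + δ`, where `δ` is the total variation distance between the law of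
`(X, A)` and the product of its marginals, so `δ ≥ 1/100`. Pinsker's inequality gives
`I(X : A) ≥ 2 δ² ≥ 2·10⁻⁴` nats, and information in bits is at least as large as in nats.
Pinsker's inequality itself follows from the pointwise bound
`3 (t - 1)² ≤ 2 (t + 2) (t log t + 1 - t)` by Cauchy–Schwarz.
-/

open MeasureTheory Real Set InformationTheory

theorem isMinOn_Ioi_of_hasDerivAt {f f' : ℝ → ℝ} {a c : ℝ} (hac : a < c)
    (hf : ∀ t ∈ Ioi a, HasDerivAt f (f' t) t) (hf' : ∀ t ∈ Ioi a, 0 ≤ (t - c) * f' t) :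
    IsMinOn f (Ioi a) c := by
  have hcont : ContinuousOn f (Ioi a) := fun t ht => (hf t ht).continuousAt.continuousWithinAt
  intro t (ht : a < t)
  rcases le_total t c with htc | hct
  · refine antitoneOn_of_hasDerivWithinAt_nonpos (f' := f') (convex_Icc t c)
      (hcont.mono fun s hs => ht.trans_le hs.1) (fun s hs => ?_) (fun s hs => ?_)
      ⟨le_rfl, htc⟩ ⟨htc, le_rfl⟩ htc
    all_goals rw [interior_Icc] at *
    · exact (hf s (ht.trans hs.1)).hasDerivWithinAt
    · nlinarith [hf' s (ht.trans hs.1), hs.2]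
  · refine monotoneOn_of_hasDerivWithinAt_nonneg (f' := f') (convex_Icc c t)
      (hcont.mono fun s hs => hac.trans_le hs.1) (fun s hs => ?_) (fun s hs => ?_)
      ⟨le_rfl, hct⟩ ⟨hct, le_rfl⟩ hct
    all_goals rw [interior_Icc] at *
    · exact (hf s (hac.trans hs.1)).hasDerivWithinAt
    · nlinarith [hf' s (hac.trans hs.1), hs.1]

theorem monotoneOn_add_one_mul_log_sub :
    MonotoneOn (fun t => (t + 1) * log t - 2 * (t - 1)) (Ioi 0) := by
  have hderiv : ∀ t ∈ Ioi (0 : ℝ), HasDerivAt (fun t => (t + 1) * log t - 2 * (t - 1))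
      (log t + t⁻¹ - 1) t := fun t (ht : 0 < t) =>
    (((hasDerivAt_id' t).add_const 1).mul (hasDerivAt_log ht.ne')).sub
      (((hasDerivAt_id' t).sub_const 1).const_mul 2) |>.congr_deriv (by field_simp; ring)
  refine monotoneOn_of_hasDerivWithinAt_nonneg (f' := fun t => log t + t⁻¹ - 1) (convex_Ioi 0)
    (fun t ht => (hderiv t ht).continuousAt.continuousWithinAt) (fun t ht => ?_) (fun t ht => ?_)
  all_goals rw [interior_Ioi] at *
  · exact (hderiv t ht).hasDerivWithinAt
  · have := log_le_sub_one_of_pos (inv_pos.2 (mem_Ioi.1 ht))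
    rw [log_inv] at this
    linarith

theorem three_mul_sub_one_sq_le_mul_klFun {t : ℝ} (ht : 0 ≤ t) :
    3 * (t - 1) ^ 2 ≤ 2 * (t + 2) * klFun t := by
  rcases ht.eq_or_lt with rfl | ht
  · norm_num [klFun_zero]
  set g : ℝ → ℝ := fun t => (t + 1) * log t - 2 * (t - 1)
  have hmin := isMinOn_Ioi_of_hasDerivAt (f := fun t => 2 * (t + 2) * klFun t - 3 * (t - 1) ^ 2)
    (f' := fun t => 4 * g t) zero_lt_one (fun t (ht : 0 < t) => ?_) (fun t (ht : 0 < t) => ?_)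
  · simpa [klFun_one] using hmin ht
  · exact (((hasDerivAt_id' t).add_const 2).const_mul 2 |>.mul (hasDerivAt_klFun ht.ne')).sub
      (((hasDerivAt_id' t).sub_const 1).pow 2 |>.const_mul 3) |>.congr_deriv
      (by simp only [g, klFun_apply]; ring)
  · have hg1 : g 1 = 0 := by simp [g]
    rcases le_total t 1 with h | h
    · nlinarith [monotoneOn_add_one_mul_log_sub ht (mem_Ioi.2 one_pos) h]
    · nlinarith [monotoneOn_add_one_mul_log_sub (mem_Ioi.2 one_pos) ht h]

theorem mul_klFun_div {x y : ℝ} (hxy : y = 0 → x = 0) :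
    y * klFun (x / y) = x * log (x / y) + y - x := by
  rcases eq_or_ne y 0 with rfl | hy
  · simp [hxy rfl]
  · rw [klFun_apply]
    field_simp

theorem three_mul_sub_sq_le_mul_klFun_div {x y : ℝ} (hx : 0 ≤ x) (hy : 0 ≤ y)
    (hxy : y = 0 → x = 0) : 3 * (x - y) ^ 2 ≤ 2 * (x + 2 * y) * (y * klFun (x / y)) := by
  rcases hy.eq_or_lt with rfl | hy
  · simp [hxy rfl]
  calc 3 * (x - y) ^ 2 = y ^ 2 * (3 * (x / y - 1) ^ 2) := by field_simp
    _ ≤ y ^ 2 * (2 * (x / y + 2) * klFun (x / y)) :=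
      mul_le_mul_of_nonneg_left (three_mul_sub_one_sq_le_mul_klFun (by positivity)) (by positivity)
    _ = 2 * (x + 2 * y) * (y * klFun (x / y)) := by field_simp

theorem sq_sum_abs_sub_le_two_mul_sum_mul_log_div {ι : Type*} [Fintype ι] {u v : ι → ℝ}
    (hu : ∀ i, 0 ≤ u i) (hv : ∀ i, 0 ≤ v i) (huv : ∀ i, v i = 0 → u i = 0)
    (hu1 : ∑ i, u i = 1) (hv1 : ∑ i, v i = 1) :
    (∑ i, |u i - v i|) ^ 2 ≤ 2 * ∑ i, u i * log (u i / v i) := by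
  have hcs := Finset.sum_sq_le_sum_mul_sum_of_sq_le_mul Finset.univ
    (r := fun i => |u i - v i|) (f := fun i => v i * klFun (u i / v i))
    (g := fun i => 2 / 3 * (u i + 2 * v i))
    (fun i _ => mul_nonneg (hv i) (klFun_nonneg (div_nonneg (hu i) (hv i))))
    (fun i _ => by linarith [hu i, hv i])
    (fun i _ => by
      rw [sq_abs]
      linarith [three_mul_sub_sq_le_mul_klFun_div (hu i) (hv i) (huv i)])
  have hkl : ∑ i, v i * klFun (u i / v i) = ∑ i, u i * log (u i / v i) := by
    simp only [mul_klFun_div (huv _), Finset.sum_sub_distrib, Finset.sum_add_distrib, hu1, hv1]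
    ring
  have hg : ∑ i, 2 / 3 * (u i + 2 * v i) = 2 := by
    rw [← Finset.mul_sum, Finset.sum_add_distrib, ← Finset.mul_sum, hu1, hv1]
    norm_num
  rwa [hkl, hg, mul_comm] at hcs

theorem le_half_sum_abs_of_sum_eq_zero {ι : Type*} [Fintype ι] [DecidableEq ι] {w : ι → ℝ}
    (hw : ∑ i, w i = 0) (i : ι) : w i ≤ (∑ j, |w j|) / 2 := by
  have hrest : ∑ j ∈ Finset.univ.erase i, w j = -w i := by
    linarith [Finset.add_sum_erase Finset.univ w (Finset.mem_univ i)]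
  have habs : |-w i| ≤ ∑ j ∈ Finset.univ.erase i, |w j| :=
    hrest ▸ Finset.abs_sum_le_sum_abs _ _
  rw [abs_neg] at habs
  linarith [Finset.add_sum_erase Finset.univ (fun j => |w j|) (Finset.mem_univ i),
    le_abs_self (w i)]

namespace MeasureTheory

variable {Ω α β γ : Type*} [MeasurableSpace Ω] {μ : Measure Ω}

theorem measureReal_eq_sum_inter_preimage [DiscreteMeasurableSpace Ω] [IsFiniteMeasure μ]
    [Fintype γ] (g : Ω → γ) (E : Set Ω) :
    μ.real E = ∑ c, μ.real (g ⁻¹' {c} ∩ E) := by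
  rw [← measureReal_restrict_apply_univ, ← preimage_univ (f := g), ← Finset.coe_univ,
    ← sum_measureReal_preimage_singleton _ fun _ _ => .of_discrete]
  simp only [measureReal_restrict_apply .of_discrete]

theorem sum_measureReal_and_eq [DiscreteMeasurableSpace Ω] [IsFiniteMeasure μ] [Fintype β]
    (X : Ω → β) (A : Ω → α) (a : α) :
    ∑ b, μ.real {ω | X ω = b ∧ A ω = a} = μ.real {ω | A ω = a} :=
  (measureReal_eq_sum_inter_preimage X _).symm

theorem sum_measureReal_eq_one [DiscreteMeasurableSpace Ω] [IsProbabilityMeasure μ] [Fintype β]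
    (X : Ω → β) : ∑ b, μ.real {ω | X ω = b} = 1 := by
  rw [← probReal_univ (μ := μ), measureReal_eq_sum_inter_preimage X univ]
  simp only [inter_univ]
  rfl

end MeasureTheory

namespace InformationTheory

variable {Ω α β γ : Type*} [MeasurableSpace Ω] {μ : Measure Ω}

noncomputable def jointProb (μ : Measure Ω) (X : Ω → β) (A : Ω → α) (c : β × α) : ℝ :=
  μ.real {ω | X ω = c.1 ∧ A ω = c.2}

noncomputable def prodProb (μ : Measure Ω) (X : Ω → β) (A : Ω → α) (c : β × α) : ℝ :=
  μ.real {ω | X ω = c.1} * μ.real {ω | A ω = c.2}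

theorem measureReal_predict_eq_sum [DiscreteMeasurableSpace Ω] [IsFiniteMeasure μ] [Fintype α]
    [Fintype γ] (X : Ω → β) (A : Ω → α) (R : Ω → γ) (f : α × γ → β) :
    μ.real {ω | f (A ω, R ω) = X ω} =
      ∑ a, ∑ r, μ.real {ω | X ω = f (a, r) ∧ A ω = a ∧ R ω = r} := by
  rw [measureReal_eq_sum_inter_preimage (fun ω => (A ω, R ω)), Fintype.sum_prod_type]
  congr! 3 with a _ r
  ext ω
  simp only [mem_inter_iff, mem_preimage, mem_singleton_iff, Prod.ext_iff, mem_ofPred_eq]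
  constructor
  · rintro ⟨⟨rfl, rfl⟩, h⟩; exact ⟨h.symm, rfl, rfl⟩
  · rintro ⟨h, rfl, rfl⟩; exact ⟨⟨rfl, rfl⟩, h.symm⟩

theorem sum_jointProb [DiscreteMeasurableSpace Ω] [IsProbabilityMeasure μ] [Fintype α]
    [Fintype β] (X : Ω → β) (A : Ω → α) :
    ∑ c, jointProb μ X A c = 1 := by
  simp only [jointProb, Fintype.sum_prod_type, Finset.sum_comm (γ := β),
    sum_measureReal_and_eq, sum_measureReal_eq_one]

theorem sum_prodProb [DiscreteMeasurableSpace Ω] [IsProbabilityMeasure μ] [Fintype α]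
    [Fintype β] (X : Ω → β) (A : Ω → α) :
    ∑ c, prodProb μ X A c = 1 := by
  simp only [prodProb, Fintype.sum_prod_type, ← Finset.mul_sum, ← Finset.sum_mul,
    sum_measureReal_eq_one, one_mul]

theorem jointProb_eq_zero_of_prodProb_eq_zero [IsFiniteMeasure μ] (X : Ω → β) (A : Ω → α)
    {c : β × α} (hc : prodProb μ X A c = 0) : jointProb μ X A c = 0 := by
  refine le_antisymm ?_ measureReal_nonneg
  rcases mul_eq_zero.1 hc with h | h
  · exact h ▸ measureReal_mono fun ω hω => hω.1
  · exact h ▸ measureReal_mono fun ω hω => hω.2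

theorem measureReal_predict_le [DiscreteMeasurableSpace Ω] [IsProbabilityMeasure μ]
    [Fintype α] [Fintype β] [Fintype γ] {X : Ω → β} {A : Ω → α} {R : Ω → γ}
    {p : ℝ} (hX : ∀ b, μ.real {ω | X ω = b} = p)
    (hindep : ∀ b a r, μ.real {ω | X ω = b ∧ A ω = a ∧ R ω = r} =
      μ.real {ω | X ω = b ∧ A ω = a} * μ.real {ω | R ω = r})
    (f : α × γ → β) :
    μ.real {ω | f (A ω, R ω) = X ω} ≤
      p + (∑ c, |jointProb μ X A c - prodProb μ X A c|) / 2 := by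
  classical
  set w : β → α → ℝ := fun b a => jointProb μ X A (b, a) - prodProb μ X A (b, a)
  have hw : ∀ a, ∑ b, w b a = 0 := fun a => by
    simp only [w, jointProb, prodProb, Finset.sum_sub_distrib, sum_measureReal_and_eq,
      ← Finset.sum_mul, sum_measureReal_eq_one, one_mul, sub_self]
  calc μ.real {ω | f (A ω, R ω) = X ω}
      = ∑ a, ∑ r, (p * μ.real {ω | A ω = a} + w (f (a, r)) a) * μ.real {ω | R ω = r} := by
        simp only [measureReal_predict_eq_sum, hindep, w, jointProb, prodProb, hX]
        ring_nf
    _ ≤ ∑ a, ∑ r, (p * μ.real {ω | A ω = a} + (∑ b, |w b a|) / 2) * μ.real {ω | R ω = r} := by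
        gcongr with a _ r _
        exact le_half_sum_abs_of_sum_eq_zero (hw a) _
    _ = p + (∑ c, |jointProb μ X A c - prodProb μ X A c|) / 2 := by
        simp only [← Finset.mul_sum, sum_measureReal_eq_one, mul_one, Finset.sum_add_distrib,
          sum_measureReal_eq_one, ← Finset.sum_div, Fintype.sum_prod_type, w]
        rw [Finset.sum_comm]

noncomputable def mutualInfo [Fintype α] [Fintype β] (μ : Measure Ω) (X : Ω → β) (A : Ω → α) :
    ℝ :=
  ∑ c, jointProb μ X A c * log (jointProb μ X A c / prodProb μ X A c)

theorem sq_sum_abs_jointProb_sub_prodProb_le [DiscreteMeasurableSpace Ω] [IsProbabilityMeasure μ]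
    [Fintype α] [Fintype β] (X : Ω → β) (A : Ω → α) :
    (∑ c, |jointProb μ X A c - prodProb μ X A c|) ^ 2 ≤ 2 * mutualInfo μ X A :=
  sq_sum_abs_sub_le_two_mul_sum_mul_log_div (fun _ => measureReal_nonneg)
    (fun _ => mul_nonneg measureReal_nonneg measureReal_nonneg)
    (fun _ => jointProb_eq_zero_of_prodProb_eq_zero X A) (sum_jointProb X A) (sum_prodProb X A)

end InformationTheory

/-- **Mutual information lower bound from prediction advantage.**
Let `X : Ω → Bool` be uniform on `{0,1}`, `A : Ω → 𝒜` and `R : Ω → ℛ` random variables with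
values in finite sets, where `R` is independent of the pair `(X, A)`.  If some function
`f : 𝒜 × ℛ → Bool` predicts `X` from `(A, R)` with probability at least `0.51`, then the
mutual information `I(X : A)` (in bits, i.e. with base-2 logarithms) is at least `2·10⁻⁴`. -/
theorem stmt_0 {Ω : Type*} [Countable Ω] [MeasurableSpace Ω] [MeasurableSingletonClass Ω]
    (μ : Measure Ω) [IsProbabilityMeasure μ]
    {𝒜 ℛ : Type*} [Fintype 𝒜] [Fintype ℛ]
    (X : Ω → Bool) (A : Ω → 𝒜) (R : Ω → ℛ)
    (hX : ∀ b : Bool, (μ {ω | X ω = b}).toReal = 1 / 2)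
    (hindep : ∀ (b : Bool) (a : 𝒜) (r : ℛ),
      (μ {ω | X ω = b ∧ A ω = a ∧ R ω = r}).toReal =
        (μ {ω | X ω = b ∧ A ω = a}).toReal * (μ {ω | R ω = r}).toReal)
    (f : 𝒜 × ℛ → Bool)
    (hf : (51 : ℝ) / 100 ≤ (μ {ω | f (A ω, R ω) = X ω}).toReal) :
    (2 : ℝ) / 10 ^ 4 ≤
      ∑ b : Bool, ∑ a : 𝒜,
        (μ {ω | X ω = b ∧ A ω = a}).toReal *
          Real.logb 2 ((μ {ω | X ω = b ∧ A ω = a}).toReal /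
            ((μ {ω | X ω = b}).toReal * (μ {ω | A ω = a}).toReal)) := by
  have hadvantage := measureReal_predict_le hX hindep f
  have hdist : 1 / 50 ≤ ∑ c, |jointProb μ X A c - prodProb μ X A c| := by
    linarith [hf.trans hadvantage]
  have hinfo : 2 / 10 ^ 4 ≤ mutualInfo μ X A := by
    nlinarith [sq_sum_abs_jointProb_sub_prodProb_le (μ := μ) X A]
  calc (2 : ℝ) / 10 ^ 4 ≤ mutualInfo μ X A := hinfo
    _ ≤ mutualInfo μ X A / log 2 := le_div_self (hinfo.trans' (by positivity))
        (log_pos one_lt_two) (log_two_lt_d9.le.trans (by norm_num))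
    _ = _ := by
      simp only [mutualInfo, jointProb, prodProb, measureReal_def, logb, Fintype.sum_prod_type,
        Finset.sum_div, mul_div_assoc]
end

section
/- There is an absolute constant C > 0 with the following property. Let m ≥ 1 be an integer and let 0 < a < b < 1. Let q₀ and q₁ be the probability mass functions on {0, 1, …, m} of Binom(m, a) and Binom(m, b) respectively, and let q̄ = (q₀ + q₁)/2. Then ½ Σ_{j=0}^{m} q₀(j) · log( q₀(j)/q̄(j) ) + ½ Σ_{j=0}^{m} q₁(j) · log( q₁(j)/q̄(j) ) ≤ C · m · (b − a)² / min(a, b, 1 − a, 1 − b). -/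
/-!
Bound each summand of `½ D(q₀‖q̄) + ½ D(q₁‖q̄)` by `log t ≤ t - 1`, which leaves the
triangular discrimination `(x - y)² / (2 (x + y))`, and that is at most the squared Hellinger
term `(√x - √y)²`. Summed over `j`, the Hellinger terms give `2 - 2 ρᵐ`, where
`ρ = √(ab) + √((1 - a)(1 - b))` is the Bhattacharyya coefficient of one coin and the binomial
theorem makes it multiply over the `m` tosses. Bernoulli's inequality gives
`2 - 2 ρᵐ ≤ 2m (1 - ρ) = m ((√a - √b)² + (√(1 - a) - √(1 - b))²)`, and
`(√u - √v)² = (u - v)² / (√u + √v)²` bounds each square by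
`(b - a)² / (4 min(a, b, 1 - a, 1 - b))`.
-/

/-- The probability mass function of the binomial distribution `Binom(m, p)` at `j`. -/
noncomputable def binomPMF (m : ℕ) (p : ℝ) (j : ℕ) : ℝ :=
  (m.choose j : ℝ) * p ^ j * (1 - p) ^ (m - j)

open Finset Real

section SqrtDifference

variable {x y : ℝ}

lemma sq_sub_eq_sq_sqrt_sub_mul_sq_sqrt_add (hx : 0 ≤ x) (hy : 0 ≤ y) :
    (x - y) ^ 2 = (√x - √y) ^ 2 * (√x + √y) ^ 2 := by
  rw [← mul_pow, mul_comm, ← sq_sub_sq, sq_sqrt hx, sq_sqrt hy]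

lemma four_mul_le_sq_sqrt_add {t : ℝ} (ht : 0 ≤ t) (htx : t ≤ x) (hty : t ≤ y) :
    4 * t ≤ (√x + √y) ^ 2 := by
  have hx : √t ≤ √x := sqrt_le_sqrt htx
  have hy : √t ≤ √y := sqrt_le_sqrt hty
  nlinarith [sq_sqrt ht, sqrt_nonneg t]

lemma sq_sqrt_add_le_two_mul_add (hx : 0 ≤ x) (hy : 0 ≤ y) :
    (√x + √y) ^ 2 ≤ 2 * (x + y) := by
  nlinarith [sq_sqrt hx, sq_sqrt hy, sq_nonneg (√x - √y)]

lemma sq_sqrt_sub_sqrt_le_sq_sub_div {t : ℝ} (ht : 0 < t) (htx : t ≤ x) (hty : t ≤ y) :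
    (√x - √y) ^ 2 ≤ (x - y) ^ 2 / (4 * t) := by
  rw [le_div_iff₀ (by positivity)]
  calc (√x - √y) ^ 2 * (4 * t) ≤ (√x - √y) ^ 2 * (√x + √y) ^ 2 :=
        mul_le_mul_of_nonneg_left (four_mul_le_sq_sqrt_add ht.le htx hty) (sq_nonneg _)
    _ = (x - y) ^ 2 := (sq_sub_eq_sq_sqrt_sub_mul_sq_sqrt_add (by linarith) (by linarith)).symm

lemma sq_sub_div_two_mul_add_le_sq_sqrt_sub_sqrt (hx : 0 ≤ x) (hy : 0 ≤ y) (hxy : 0 < x + y) :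
    (x - y) ^ 2 / (2 * (x + y)) ≤ (√x - √y) ^ 2 := by
  rw [div_le_iff₀ (by positivity), sq_sub_eq_sq_sqrt_sub_mul_sq_sqrt_add hx hy]
  exact mul_le_mul_of_nonneg_left (sq_sqrt_add_le_two_mul_add hx hy) (sq_nonneg _)

lemma half_mul_log_div_mean_add_le_sq_sqrt_sub_sqrt (hx : 0 < x) (hy : 0 < y) :
    (1 / 2) * (x * log (x / ((x + y) / 2))) + (1 / 2) * (y * log (y / ((x + y) / 2))) ≤
      (√x - √y) ^ 2 := by
  have hlog (z : ℝ) (hz : 0 < z) :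
      z * log (z / ((x + y) / 2)) ≤ z * (z / ((x + y) / 2) - 1) :=
    mul_le_mul_of_nonneg_left (log_le_sub_one_of_pos (by positivity)) hz.le
  have htriangular : (1 / 2) * (x * (x / ((x + y) / 2) - 1)) +
      (1 / 2) * (y * (y / ((x + y) / 2) - 1)) = (x - y) ^ 2 / (2 * (x + y)) := by
    field_simp
    ring
  linarith [hlog x hx, hlog y hy,
    sq_sub_div_two_mul_add_le_sq_sqrt_sub_sqrt hx.le hy.le (add_pos hx hy)]

end SqrtDifference

lemma sum_sq_sqrt_sub_sqrt {ι : Type*} (s : Finset ι) {p q : ι → ℝ}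
    (hp : ∀ i ∈ s, 0 ≤ p i) (hq : ∀ i ∈ s, 0 ≤ q i) :
    ∑ i ∈ s, (√(p i) - √(q i)) ^ 2 =
      ∑ i ∈ s, p i + ∑ i ∈ s, q i - 2 * ∑ i ∈ s, √(p i * q i) := by
  rw [mul_sum, ← sum_add_distrib, ← sum_sub_distrib]
  refine sum_congr rfl fun i hi => ?_
  rw [sqrt_mul (hp i hi), sub_sq, sq_sqrt (hp i hi), sq_sqrt (hq i hi)]
  ring

lemma one_sub_pow_le_mul_one_sub {t : ℝ} (ht : 0 ≤ t) (m : ℕ) :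
    1 - t ^ m ≤ m * (1 - t) := by
  have h := one_add_mul_le_pow (a := t - 1) (by linarith) m
  rw [add_sub_cancel] at h
  linarith

lemma two_mul_one_sub_bhattacharyya {a b : ℝ} (ha : 0 ≤ a) (ha1 : a ≤ 1) (hb : 0 ≤ b)
    (hb1 : b ≤ 1) :
    2 * (1 - (√(a * b) + √((1 - a) * (1 - b)))) =
      (√a - √b) ^ 2 + (√(1 - a) - √(1 - b)) ^ 2 := by
  rw [sqrt_mul ha, sqrt_mul (by linarith)]
  linear_combination -sq_sqrt ha - sq_sqrt hb - sq_sqrt (sub_nonneg.2 ha1) -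
    sq_sqrt (sub_nonneg.2 hb1)

lemma binomPMF_pos {m j : ℕ} (hj : j ≤ m) {p : ℝ} (hp : 0 < p) (hp1 : p < 1) :
    0 < binomPMF m p j := by
  have hc : 0 < (m.choose j : ℝ) := by exact_mod_cast Nat.choose_pos hj
  have h1 : 0 < 1 - p := by linarith
  unfold binomPMF
  positivity

lemma sum_range_binomPMF (m : ℕ) (p : ℝ) : ∑ j ∈ range (m + 1), binomPMF m p j = 1 := by
  have h := (add_pow p (1 - p) m).symm
  rw [add_sub_cancel, one_pow] at h
  rw [← h]
  refine sum_congr rfl fun j _ => ?_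
  rw [binomPMF]
  ring

lemma sum_range_sqrt_binomPMF_mul {a b : ℝ} (ha : 0 ≤ a) (ha1 : a ≤ 1) (hb : 0 ≤ b)
    (hb1 : b ≤ 1) (m : ℕ) :
    ∑ j ∈ range (m + 1), √(binomPMF m a j * binomPMF m b j) =
      (√(a * b) + √((1 - a) * (1 - b))) ^ m := by
  have h1a : 0 ≤ 1 - a := by linarith
  have h1b : 0 ≤ 1 - b := by linarith
  rw [add_pow]
  refine sum_congr rfl fun j _ => ?_
  have hprod : binomPMF m a j * binomPMF m b j =
      ((m.choose j : ℝ) * √(a * b) ^ j * √((1 - a) * (1 - b)) ^ (m - j)) ^ 2 := by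
    rw [mul_pow, mul_pow, ← pow_mul, ← pow_mul, mul_comm j 2, mul_comm (m - j) 2, pow_mul,
      pow_mul, sq_sqrt (mul_nonneg ha hb), sq_sqrt (mul_nonneg h1a h1b), mul_pow a,
      mul_pow (1 - a), binomPMF, binomPMF]
    ring
  rw [hprod, sqrt_sq (by positivity)]
  ring

/-- **One-coin mutual information upper bound.**
There is an absolute constant `C > 0` such that for every `m ≥ 1` and `0 < a < b < 1`,
letting `q₀, q₁` be the pmfs of `Binom(m, a)` and `Binom(m, b)` and `q̄ = (q₀ + q₁)/2`,
we have `½ D(q₀‖q̄) + ½ D(q₁‖q̄) ≤ C · m · (b − a)² / min(a, b, 1 − a, 1 − b)`. -/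
theorem stmt_1 : ∃ C : ℝ, 0 < C ∧
    ∀ m : ℕ, 1 ≤ m → ∀ a b : ℝ, 0 < a → a < b → b < 1 →
      (1 / 2) * (∑ j ∈ Finset.range (m + 1),
          binomPMF m a j *
            Real.log (binomPMF m a j / ((binomPMF m a j + binomPMF m b j) / 2))) +
        (1 / 2) * (∑ j ∈ Finset.range (m + 1),
          binomPMF m b j *
            Real.log (binomPMF m b j / ((binomPMF m a j + binomPMF m b j) / 2))) ≤
      C * m * (b - a) ^ 2 / min (min a b) (min (1 - a) (1 - b)) := by
  refine ⟨1 / 2, by norm_num, fun m _ a b ha hab hb1 => ?_⟩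
  have hb : 0 < b := ha.trans hab
  have ha1 : a < 1 := hab.trans hb1
  set s := min (min a b) (min (1 - a) (1 - b))
  have hs : 0 < s := lt_min (lt_min ha hb) (lt_min (by linarith) (by linarith))
  have hpos {p : ℝ} (hp : 0 < p) (hp1 : p < 1) (j : ℕ) (hj : j ∈ range (m + 1)) :
      0 < binomPMF m p j :=
    binomPMF_pos (Nat.lt_succ_iff.mp (mem_range.mp hj)) hp hp1
  calc _ ≤ ∑ j ∈ range (m + 1), (√(binomPMF m a j) - √(binomPMF m b j)) ^ 2 := by
        rw [mul_sum, mul_sum, ← sum_add_distrib]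
        exact sum_le_sum fun j hj => half_mul_log_div_mean_add_le_sq_sqrt_sub_sqrt
          (hpos ha ha1 j hj) (hpos hb hb1 j hj)
    _ = 2 * (1 - (√(a * b) + √((1 - a) * (1 - b))) ^ m) := by
        rw [sum_sq_sqrt_sub_sqrt _ (fun j hj => (hpos ha ha1 j hj).le)
          (fun j hj => (hpos hb hb1 j hj).le), sum_range_binomPMF, sum_range_binomPMF,
          sum_range_sqrt_binomPMF_mul ha.le ha1.le hb.le hb1.le]
        ring
    _ ≤ m * (2 * (1 - (√(a * b) + √((1 - a) * (1 - b))))) := by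
        have hρ : 0 ≤ √(a * b) + √((1 - a) * (1 - b)) := by positivity
        nlinarith [one_sub_pow_le_mul_one_sub hρ m]
    _ = m * ((√a - √b) ^ 2 + (√(1 - a) - √(1 - b)) ^ 2) := by
        rw [two_mul_one_sub_bhattacharyya ha.le ha1.le hb.le hb1.le]
    _ ≤ m * ((a - b) ^ 2 / (4 * s) + ((1 - a) - (1 - b)) ^ 2 / (4 * s)) := by
        gcongr
        · exact sq_sqrt_sub_sqrt_le_sq_sub_div hs (min_le_of_left_le (min_le_left _ _))
            (min_le_of_left_le (min_le_right _ _))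
        · exact sq_sqrt_sub_sqrt_le_sq_sub_div hs (min_le_of_right_le (min_le_left _ _))
            (min_le_of_right_le (min_le_right _ _))
    _ = 1 / 2 * m * (b - a) ^ 2 / s := by
        field_simp
        ring
end
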